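/- arXiv:2308.08240 — 6 statements merged into one kernel-verified Lean document; each statement's English description precedes it below -/
import Mathlib

section
/- For all positive integers k and d with k ≥ 2d, the boxicity of the circular clique G_k^d is at most its chromatic number: box(G_k^d) ≤ χ(G_k^d). -/
open SimpleGraph Finset

/-- A representation of `G` as intersection graph of boxes in `ℝ^ℓ`
(products of `ℓ` closed bounded intervals). -/
def BoxRep {V : Type*} (G : SimpleGraph V) (ℓ : ℕ) : Prop :=
  ∃ f : V → Fin ℓ → ℝ × ℝ,
    (∀ v i, (f v i).1 ≤ (f v i).2) ∧
    ∀ u v : V, u ≠ v →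
      (G.Adj u v ↔ ∀ i, max (f u i).1 (f v i).1 ≤ min (f u i).2 (f v i).2)

/-- The boxicity of a graph: the least positive `ℓ` admitting a box representation. -/
noncomputable def boxicity {V : Type*} (G : SimpleGraph V) : ℕ :=
  sInf {ℓ : ℕ | 0 < ℓ ∧ BoxRep G ℓ}

/-- A graph is an interval graph iff it has a box representation in dimension 1. -/
def IsIntervalGraph {V : Type*} (G : SimpleGraph V) : Prop := BoxRep G 1

/-- A graph is not complete. -/
def NotComplete {V : Type*} (G : SimpleGraph V) : Prop := ∃ a b : V, a ≠ b ∧ ¬ G.Adj a b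

/-- The circular clique `G_k^d`: vertices `a_0, …, a_{k-1}`, with `a_i ~ a_j`
iff `d ≤ |i - j| ≤ k - d`. -/
def circularClique (k d : ℕ) : SimpleGraph (Fin k) :=
  SimpleGraph.fromRel (fun i j =>
    d ≤ ((i : ℤ) - (j : ℤ)).natAbs ∧ ((i : ℤ) - (j : ℤ)).natAbs ≤ k - d)

/-- The `G`-generalized join `G[H₁, …, Hₙ]`. -/
def genJoin {n : ℕ} {V : Fin n → Type*} (G : SimpleGraph (Fin n))
    (H : ∀ i, SimpleGraph (V i)) : SimpleGraph (Σ i, V i) :=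
  SimpleGraph.fromRel (fun x y =>
    G.Adj x.1 y.1 ∨ ∃ h : x.1 = y.1, (H y.1).Adj (h ▸ x.2) y.2)

/-- The join `G ∨ H` of two disjoint graphs. -/
def graphJoin {α β : Type*} (G : SimpleGraph α) (H : SimpleGraph β) :
    SimpleGraph (α ⊕ β) :=
  SimpleGraph.fromRel (fun x y =>
    match x, y with
    | .inl a, .inl b => G.Adj a b
    | .inr a, .inr b => H.Adj a b
    | _, _ => True)

/-- The equivalence `x ∼ y ↔ N(x) = N(y)` (equal open neighborhoods). -/
def nbhdSetoid {V : Type*} (G : SimpleGraph V) : Setoid V :=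
  ⟨fun x y => G.neighborSet x = G.neighborSet y,
    ⟨fun _ => rfl, Eq.symm, Eq.trans⟩⟩

/-- The reduced graph of `G`: vertices are the classes of `nbhdSetoid G`,
with `[x] ~ [y]` iff `x ~ y` in `G`. -/
def reducedGraph {V : Type*} (G : SimpleGraph V) :
    SimpleGraph (Quotient (nbhdSetoid G)) :=
  SimpleGraph.fromRel (fun a b =>
    ∃ x y : V, Quotient.mk (nbhdSetoid G) x = a ∧ Quotient.mk (nbhdSetoid G) y = b ∧ G.Adj x y)

/-- The zero-divisor graph of a commutative ring: vertices are the nonzero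
zero-divisors, with `x ~ y` iff `x * y = 0`. -/
def zeroDivisorGraph (R : Type*) [CommRing R] :
    SimpleGraph {x : R // x ≠ 0 ∧ ∃ y : R, y ≠ 0 ∧ x * y = 0} :=
  SimpleGraph.fromRel (fun x y => (x : R) * (y : R) = 0)

/-- Equivalence on a ring: equal annihilators. -/
def annSetoid (R : Type*) [CommRing R] : Setoid R :=
  ⟨fun x y => ∀ r : R, x * r = 0 ↔ y * r = 0,
    ⟨fun _ _ => Iff.rfl, fun h r => (h r).symm, fun h h' r => (h r).trans (h' r)⟩⟩

/-- Vertices of the compressed zero-divisor graph: annihilator classes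
other than the class of `0` and the class of `1`. -/
def CompressedVertex (R : Type*) [CommRing R] : Type _ :=
  {c : Quotient (annSetoid R) //
    c ≠ Quotient.mk (annSetoid R) 0 ∧ c ≠ Quotient.mk (annSetoid R) 1}

/-- The compressed zero-divisor graph `Γ_E(R)`. -/
def compressedZDG (R : Type*) [CommRing R] : SimpleGraph (CompressedVertex R) :=
  SimpleGraph.fromRel (fun c c' =>
    ∃ x y : R, Quotient.mk (annSetoid R) x = c.1 ∧ Quotient.mk (annSetoid R) y = c'.1 ∧ x * y = 0)

/-- The graph of proper divisors of `N` (`1 < d < N`), `d ~ d'` iff `N ∣ d * d'`;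
this is the compressed zero-divisor graph of `ℤ_N`. -/
def divisorGraph (N : ℕ) : SimpleGraph {d : ℕ // d ∣ N ∧ 1 < d ∧ d < N} :=
  SimpleGraph.fromRel (fun d e => N ∣ d.1 * e.1)

lemma circ_adj_iff (k d : ℕ) (u v : Fin k) :
    (circularClique k d).Adj u v ↔
      u ≠ v ∧ d ≤ ((u:ℤ) - (v:ℤ)).natAbs ∧ ((u:ℤ) - (v:ℤ)).natAbs ≤ k - d := by
  simp only [circularClique, fromRel_adj]
  constructor
  · rintro ⟨hne, h | h⟩
    · exact ⟨hne, h⟩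
    · exact ⟨hne, by omega, by omega⟩
  · rintro ⟨hne, h1, h2⟩; exact ⟨hne, Or.inl ⟨h1, h2⟩⟩

/-- rotated coordinate of `v` in dimension `i` -/
def cR (k d : ℕ) (v : Fin k) (i : ℕ) : ℕ := (v.val + k - d * i) % k

/-- the box representation map -/
noncomputable def cF (k d : ℕ) (v : Fin k) (i : Fin ((k-1)/d + 1)) : ℝ × ℝ :=
  if v.val / d = i.val then
    (((2 * cR k d v i.val + 2*(k-d) : ℕ) : ℝ), ((2 * cR k d v i.val + 2*(k-d) + 1 : ℕ) : ℝ))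
  else
    (((2 * cR k d v i.val : ℕ) : ℝ), ((2*k + 1 : ℕ) : ℝ))

lemma hPlt (k d : ℕ) (hk : 0 < k) (hd : 0 < d) (i : Fin ((k-1)/d + 1)) :
    d * i.val < k := by
  have h1 : i.val ≤ (k-1)/d := by have := i.isLt; omega
  have h2 : d * i.val ≤ d * ((k-1)/d) := Nat.mul_le_mul (le_refl d) h1
  have h3 : d * ((k-1)/d) ≤ k-1 := by rw [mul_comm]; exact Nat.div_mul_le_self _ _
  omega

lemma cRspec (k d : ℕ) (hP : d * i < k) (v : Fin k) :
    (v.val < d*i ∧ cR k d v i = v.val + k - d*i) ∨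
    (d*i ≤ v.val ∧ cR k d v i = v.val - d*i) := by
  have hv : v.val < k := v.isLt
  rcases Nat.lt_or_ge v.val (d*i) with h | h
  · left
    refine ⟨h, ?_⟩
    unfold cR
    exact Nat.mod_eq_of_lt (by omega)
  · right
    refine ⟨h, ?_⟩
    unfold cR
    have e : v.val + k - d * i = (v.val - d * i) + k := by omega
    rw [e, Nat.add_mod_right]
    exact Nat.mod_eq_of_lt (by omega)

lemma clsspec (k d : ℕ) (hd : 0 < d) (v : Fin k) (i : ℕ) :
    v.val / d = i ↔ d*i ≤ v.val ∧ v.val < d*i + d := by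
  constructor
  · intro h
    have hdm := Nat.div_add_mod v.val d
    have hlt : v.val % d < d := Nat.mod_lt _ hd
    rw [h] at hdm
    omega
  · rintro ⟨h1, h2⟩
    have e1 : i * d ≤ v.val := by rw [mul_comm]; omega
    have e2 : v.val < (i+1) * d := by
      have : (i+1)*d = d*i + d := by ring
      omega
    exact Nat.div_eq_of_lt_le e1 e2

lemma boxrep_circ (k d : ℕ) (hd : 0 < d) (hkd : 2 * d ≤ k) :
    BoxRep (circularClique k d) ((k-1)/d + 1) := by
  have hk : 0 < k := by omega
  refine ⟨cF k d, ?_, ?_⟩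
  · intro v i
    have hP := hPlt k d hk hd i
    have hR := cRspec k d hP v
    have hv : v.val < k := v.isLt
    unfold cF
    split
    · dsimp only
      have : 2 * cR k d v i.val + 2*(k-d) ≤ 2 * cR k d v i.val + 2*(k-d) + 1 := by omega
      exact_mod_cast this
    · dsimp only
      have : 2 * cR k d v i.val ≤ 2*k + 1 := by omega
      exact_mod_cast this
  · intro u v huv
    have hvne : u.val ≠ v.val := fun h => huv (Fin.ext h)
    have hu' : u.val < k := u.isLt
    have hv' : v.val < k := v.isLt
    constructor
    · -- adjacency ⇒ all boxes intersect
      intro hadj i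
      rw [circ_adj_iff] at hadj
      obtain ⟨-, hd1, hd2⟩ := hadj
      have hP := hPlt k d hk hd i
      have hRu := cRspec k d hP u
      have hRv := cRspec k d hP v
      by_cases cu : u.val / d = i.val <;> by_cases cv : v.val / d = i.val
      · exfalso
        rw [clsspec k d hd] at cu cv
        omega
      · rw [clsspec k d hd] at cu
        rw [clsspec k d hd] at cv
        unfold cF
        rw [if_pos ((clsspec k d hd u i.val).mpr cu), if_neg (fun h => cv ((clsspec k d hd v i.val).mp h))]
        dsimp only
        rw [← Nat.cast_max, ← Nat.cast_min, Nat.cast_le]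
        omega
      · rw [clsspec k d hd] at cu
        rw [clsspec k d hd] at cv
        unfold cF
        rw [if_neg (fun h => cu ((clsspec k d hd u i.val).mp h)), if_pos ((clsspec k d hd v i.val).mpr cv)]
        dsimp only
        rw [← Nat.cast_max, ← Nat.cast_min, Nat.cast_le]
        omega
      · rw [clsspec k d hd] at cu
        rw [clsspec k d hd] at cv
        unfold cF
        rw [if_neg (fun h => cu ((clsspec k d hd u i.val).mp h)), if_neg (fun h => cv ((clsspec k d hd v i.val).mp h))]
        dsimp only
        rw [← Nat.cast_max, ← Nat.cast_min, Nat.cast_le]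
        omega
    · -- contrapositive: all intersect ⇒ adjacent
      intro hall
      by_contra hnadj
      rw [circ_adj_iff] at hnadj
      have hδ : ¬ (d ≤ ((u:ℤ) - (v:ℤ)).natAbs ∧ ((u:ℤ) - (v:ℤ)).natAbs ≤ k - d) := by
        intro hc; exact hnadj ⟨huv, hc.1, hc.2⟩
      -- find the breaking dimension
      -- a is "behind", b is "ahead": b ≡ a + σ (mod k), 1 ≤ σ ≤ d-1
      obtain ⟨a, b, σ, hσ1, hσ2, hab, hswap⟩ :
          ∃ (a b : Fin k) (σ : ℕ), 1 ≤ σ ∧ σ ≤ d - 1 ∧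
            (b.val = a.val + σ ∨ a.val + σ = b.val + k) ∧
            ((a = u ∧ b = v) ∨ (a = v ∧ b = u)) := by
        rcases Nat.lt_or_ge u.val v.val with hlt | hge
        · rcases Nat.lt_or_ge (v.val - u.val) d with hsmall | hbig
          · exact ⟨u, v, v.val - u.val, by omega, by omega, by omega, Or.inl ⟨rfl, rfl⟩⟩
          · exact ⟨v, u, k - (v.val - u.val), by omega, by omega, by omega, Or.inr ⟨rfl, rfl⟩⟩
        · rcases Nat.lt_or_ge (u.val - v.val) d with hsmall | hbig
          · exact ⟨v, u, u.val - v.val, by omega, by omega, by omega, Or.inr ⟨rfl, rfl⟩⟩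
          · exact ⟨u, v, k - (u.val - v.val), by omega, by omega, by omega, Or.inl ⟨rfl, rfl⟩⟩
      have hb' : b.val < k := b.isLt
      have ha' : a.val < k := a.isLt
      -- the breaking dimension is the class of b
      have hi0 : b.val / d < (k-1)/d + 1 := by
        have := Nat.div_le_div_right (c := d) (by omega : b.val ≤ k - 1)
        omega
      have hP : d * (b.val / d) < k := hPlt k d hk hd ⟨b.val / d, hi0⟩
      have hRa := cRspec k d hP a
      have hRb := cRspec k d hP b
      have cbs := (clsspec k d hd b (b.val / d)).mp rfl
      have hcon := hall ⟨b.val / d, hi0⟩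
      have hmm : ¬ (max (cF k d a ⟨b.val / d, hi0⟩).1 (cF k d b ⟨b.val / d, hi0⟩).1 ≤
          min (cF k d a ⟨b.val / d, hi0⟩).2 (cF k d b ⟨b.val / d, hi0⟩).2) := by
        by_cases ca : a.val / d = b.val / d
        · have cas := (clsspec k d hd a (b.val / d)).mp ca
          simp only [cF, Fin.val_mk]
          rw [if_pos ca]; simp only [if_true]
          rw [← Nat.cast_max, ← Nat.cast_min, Nat.cast_le]
          omega
        · have cas : ¬ (d * (b.val / d) ≤ a.val ∧ a.val < d * (b.val / d) + d) :=
            fun h => ca ((clsspec k d hd a (b.val / d)).mpr h)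
          simp only [cF, Fin.val_mk]
          rw [if_neg ca]; simp only [if_true]
          rw [← Nat.cast_max, ← Nat.cast_min, Nat.cast_le]
          omega
      rcases hswap with ⟨rfl, rfl⟩ | ⟨rfl, rfl⟩
      · exact hmm hcon
      · exact hmm (by rw [max_comm, min_comm]; exact hcon)

lemma indep_card_le (k d : ℕ) (hd : 0 < d) (hkd : 2 * d ≤ k)
    (S : Finset (Fin k)) (hS : ∀ u ∈ S, ∀ v ∈ S, u ≠ v → ¬ (circularClique k d).Adj u v) :
    S.card ≤ d := by
  rcases S.eq_empty_or_nonempty with rfl | hne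
  · simp
  · set m₀ := S.min' hne with hm₀
    have hm₀S : m₀ ∈ S := S.min'_mem hne
    -- every s in S satisfies: s.val - m₀.val ≤ d-1 or ≥ k-d+1
    have key : ∀ s ∈ S, m₀.val ≤ s.val ∧
        (s.val - m₀.val ≤ d - 1 ∨ k - d + 1 ≤ s.val - m₀.val) := by
      intro s hs
      have h1 : m₀ ≤ s := S.min'_le s hs
      refine ⟨h1, ?_⟩
      by_cases hse : s = m₀
      · subst hse; omega
      · have := hS s hs m₀ hm₀S hse
        rw [circ_adj_iff] at this
        have hv : m₀.val < k := m₀.isLt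
        have hv2 : s.val < k := s.isLt
        have hne2 : s ≠ m₀ := hse
        have : ¬ (d ≤ ((s:ℤ) - (m₀:ℤ)).natAbs ∧ ((s:ℤ) - (m₀:ℤ)).natAbs ≤ k - d) := by
          intro hc; exact this ⟨hse, hc.1, hc.2⟩
        have hval : m₀.val ≠ s.val := fun h => hse (Fin.ext h.symm)
        omega
    -- injective map into range d
    have : S.card ≤ (Finset.range d).card := by
      apply Finset.card_le_card_of_injOn
        (fun s => if s.val - m₀.val ≤ d - 1 then s.val - m₀.val else s.val - m₀.val - (k - d))
      · intro s hs
        have := key s hs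
        simp only [Finset.mem_range, Finset.coe_range, Set.mem_Iio]
        have : s.val < k := s.isLt
        split <;> omega
      · intro s hs t ht hst
        have ks := key s hs
        have kt := key t ht
        have hs' : s.val < k := s.isLt
        have ht' : t.val < k := t.isLt
        by_contra hne2
        have hadj := hS s hs t ht hne2
        rw [circ_adj_iff] at hadj
        have : ¬ (d ≤ ((s:ℤ) - (t:ℤ)).natAbs ∧ ((s:ℤ) - (t:ℤ)).natAbs ≤ k - d) := by
          intro hc; exact hadj ⟨hne2, hc.1, hc.2⟩
        have hvne : s.val ≠ t.val := fun h => hne2 (Fin.ext h)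
        simp only at hst
        split at hst <;> split at hst <;> omega
    simpa using this

lemma colorable_bound (k d : ℕ) (hd : 0 < d) (hkd : 2 * d ≤ k)
    (n : ℕ) (hc : (circularClique k d).Colorable n) : k ≤ n * d := by
  obtain ⟨C⟩ := hc
  have hcard : (Finset.univ : Finset (Fin k)).card =
      ∑ c : Fin n, ((Finset.univ : Finset (Fin k)).filter (fun v => C v = c)).card := by
    exact Finset.card_eq_sum_card_fiberwise (fun v _ => Finset.mem_univ (C v))
  have hfib : ∀ c : Fin n,
      ((Finset.univ : Finset (Fin k)).filter (fun v => C v = c)).card ≤ d := by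
    intro c
    apply indep_card_le k d hd hkd
    intro u hu v hv huv hadj
    simp only [Finset.mem_filter] at hu hv
    exact C.valid hadj (hu.2.trans hv.2.symm)
  calc k = (Finset.univ : Finset (Fin k)).card := by simp
    _ = _ := hcard
    _ ≤ ∑ _c : Fin n, d := Finset.sum_le_sum (fun c _ => hfib c)
    _ = n * d := by simp [Finset.sum_const, mul_comm]

/-- For `k ≥ 2d`, `box(G_k^d) ≤ χ(G_k^d)`. -/
theorem boxicity_circularClique_le_chromaticNumber (k d : ℕ) (hd : 0 < d)
    (hkd : 2 * d ≤ k) :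
    (boxicity (circularClique k d) : ℕ∞) ≤ (circularClique k d).chromaticNumber := by
  have hbox : boxicity (circularClique k d) ≤ (k-1)/d + 1 :=
    Nat.sInf_le ⟨Nat.succ_pos _, boxrep_circ k d hd hkd⟩
  rw [SimpleGraph.chromaticNumber]
  refine le_iInf₂ fun n hn => ?_
  have hn' : (circularClique k d).Colorable n := hn
  have hkn : k ≤ n * d := colorable_bound k d hd hkd n hn'
  have hmn : (k-1)/d + 1 ≤ n := by
    have h1 : (k-1)/d < n := by
      rw [Nat.div_lt_iff_lt_mul hd]
      omega
    omega
  calc ((boxicity (circularClique k d) : ℕ∞)) ≤ (((k-1)/d + 1 : ℕ) : ℕ∞) := by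
        exact_mod_cast hbox
    _ ≤ (n : ℕ∞) := by exact_mod_cast hmn
end

section
/- For positive integers k ≥ 2d, the chromatic number of the circular clique G_k^d equals ⌈k/d⌉. -/
/-! Colour vertex `i` by `⌊i / d⌋`: vertices in a block of `d` consecutive indices are at distance
less than `d`, hence pairwise non-adjacent, so `⌈k / d⌉` colours suffice. Conversely, when
`2d ≤ k` an independent set has at most `d` vertices, so an `n`-colouring forces `k ≤ n d`. -/

open SimpleGraph Finset

theorem SimpleGraph.Colorable.card_le_mul {V : Type*} [Fintype V] {G : SimpleGraph V} {n t : ℕ}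
    (hG : G.Colorable n) (ht : ∀ s : Finset V, G.IsIndepSet (s : Set V) → #s ≤ t) :
    Fintype.card V ≤ n * t := by
  obtain ⟨C⟩ := hG
  classical
  calc Fintype.card V = ∑ c : Fin n, #{v | C v = c} :=
        card_eq_sum_card_fiberwise fun v _ ↦ mem_univ (C v)
    _ ≤ ∑ _c : Fin n, t := sum_le_sum fun c _ ↦
        ht _ (by simpa [Coloring.colorClass] using C.isIndepSet_colorClass c)
    _ = n * t := by simp

namespace circularClique

variable {k d n : ℕ}

theorem adj_iff (hd : 0 < d) {i j : Fin k} :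
    (circularClique k d).Adj i j ↔
      d ≤ ((i : ℤ) - j).natAbs ∧ ((i : ℤ) - j).natAbs ≤ k - d := by
  simp only [circularClique, fromRel_adj]
  constructor
  · rintro ⟨-, h | h⟩ <;> omega
  · intro h
    exact ⟨fun hij ↦ by subst hij; omega, Or.inl h⟩

/-- The cyclic offset from `x` to `y`, reduced by `k - d` when it exceeds `k - d`. Non-neighbours
of `x` land in `[0, d)`, and two vertices with the same value are equal or at cyclic distance
`k - d`, hence adjacent: so an independent set containing `x` has at most `d` elements. -/
def foldedOffset (k d : ℕ) (x y : Fin k) : ℕ :=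
  if ((y - x : Fin k) : ℕ) ≤ k - d then (y - x : Fin k) else (y - x : Fin k) - (k - d)

theorem foldedOffset_lt (hd : 0 < d) {x y : Fin k} (h : ¬ (circularClique k d).Adj x y) :
    foldedOffset k d x y < d := by
  rw [adj_iff hd] at h
  have := Fin.intCast_val_sub_eq_sub_add_ite y x
  unfold foldedOffset
  split_ifs at * <;> omega

theorem eq_of_foldedOffset_eq (hd : 0 < d) (hkd : 2 * d ≤ k) {x y z : Fin k}
    (hyz : ¬ (circularClique k d).Adj y z) (h : foldedOffset k d x y = foldedOffset k d x z) :
    y = z := by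
  rw [adj_iff hd] at hyz
  have := Fin.intCast_val_sub_eq_sub_add_ite y x
  have := Fin.intCast_val_sub_eq_sub_add_ite z x
  apply Fin.ext
  unfold foldedOffset at h
  split_ifs at * <;> omega

theorem card_le_of_isIndepSet (hd : 0 < d) (hkd : 2 * d ≤ k) {s : Finset (Fin k)}
    (hs : (circularClique k d).IsIndepSet (s : Set (Fin k))) : #s ≤ d := by
  have hs' : ∀ y ∈ s, ∀ z ∈ s, ¬ (circularClique k d).Adj y z := fun y hy z hz hyz ↦
    hs hy hz hyz.ne hyz
  obtain rfl | ⟨x, hx⟩ := s.eq_empty_or_nonempty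
  · simp
  · simpa using card_le_card_of_injOn (foldedOffset k d x) (t := range d)
      (fun y hy ↦ mem_range.2 (foldedOffset_lt hd (hs' x hx y hy)))
      (fun y hy z hz ↦ eq_of_foldedOffset_eq hd hkd (hs' y hy z hz))

theorem colorable_of_le_mul (hd : 0 < d) (h : k ≤ d * n) : (circularClique k d).Colorable n := by
  refine ⟨Coloring.mk (fun i ↦ ⟨i / d, (Nat.div_lt_iff_lt_mul hd).2 (by linarith [i.isLt])⟩) ?_⟩
  intro i j hij hcol
  rw [adj_iff hd] at hij
  have hq : (i : ℕ) / d = j / d := Fin.val_eq_of_eq hcol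
  have hi := Nat.div_mul_le_self i d
  have hi' := Nat.lt_div_mul_add (a := i) hd
  rw [hq] at hi hi'
  have := Nat.div_mul_le_self j d
  have := Nat.lt_div_mul_add (a := j) hd
  omega

theorem colorable_iff (hd : 0 < d) (hkd : 2 * d ≤ k) :
    (circularClique k d).Colorable n ↔ k ≤ d * n :=
  ⟨fun h ↦ by simpa [mul_comm] using h.card_le_mul fun s ↦ card_le_of_isIndepSet hd hkd,
    colorable_of_le_mul hd⟩

end circularClique

/-- For `k ≥ 2d`, `χ(G_k^d) = ⌈k / d⌉`. -/
theorem chromaticNumber_circularClique (k d : ℕ) (hd : 0 < d) (hkd : 2 * d ≤ k) :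
    (circularClique k d).chromaticNumber = (((k + d - 1) / d : ℕ) : ℕ∞) := by
  rw [← Nat.ceilDiv_eq_add_pred_div]
  have hcol : ∀ n, (circularClique k d).Colorable n ↔ k ⌈/⌉ d ≤ n := fun n ↦
    (circularClique.colorable_iff hd hkd).trans (ceilDiv_le_iff_le_mul hd).symm
  exact le_antisymm ((hcol _).2 le_rfl).chromaticNumber_le
    (le_chromaticNumber_iff_colorable.2 fun n hn ↦ (hcol n).1 hn)
end

section
/- If G and H are graphs neither of which is complete, then box(G ∨ H) ≥ box(G) + box(H), where G ∨ H denotes the join of G and H. -/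
open SimpleGraph Finset

/-!
Fix a box representation of `G ∨ H` of dimension `box(G ∨ H)`, and call a coordinate a
`G`-coordinate if two vertices of `G` get disjoint intervals in it (likewise for `H`).
Every vertex of `H` is adjacent to every vertex of `G`, so in a `G`-coordinate all intervals of
`H` contain the gap between two disjoint intervals of `G` and pairwise meet: no coordinate is
both a `G`- and an `H`-coordinate. Coordinates in which all intervals pairwise meet carry no
information, so the `G`-coordinates alone represent `G`, and there is at least one of them
because `G` is not complete.
-/

section BoxRepresentations

variable {V W ι κ : Type*}

abbrev IntervalsMeet (p q : ℝ × ℝ) : Prop := max p.1 q.1 ≤ min p.2 q.2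

lemma IntervalsMeet.of_meet_disjoint_pair {p q r s : ℝ × ℝ} (hrs : ¬ IntervalsMeet r s)
    (hpr : IntervalsMeet p r) (hps : IntervalsMeet p s) (hqr : IntervalsMeet q r)
    (hqs : IntervalsMeet q s) : IntervalsMeet p q := by
  simp only [IntervalsMeet, max_le_iff, le_min_iff] at *
  rcases lt_or_ge r.2 s.1 with h | h
  · refine ⟨⟨?_, ?_⟩, ?_, ?_⟩ <;> linarith
  rcases lt_or_ge s.2 r.1 with h' | h'
  · refine ⟨⟨?_, ?_⟩, ?_, ?_⟩ <;> linarith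
  exact absurd ⟨⟨hpr.2.2, h⟩, h', hps.2.2⟩ hrs

structure IsBoxRep (G : SimpleGraph V) (f : V → ι → ℝ × ℝ) : Prop where
  fst_le_snd : ∀ v i, (f v i).1 ≤ (f v i).2
  adj_iff : ∀ {u v}, u ≠ v → (G.Adj u v ↔ ∀ i, IntervalsMeet (f u i) (f v i))

lemma boxRep_iff {G : SimpleGraph V} {ℓ : ℕ} :
    BoxRep G ℓ ↔ ∃ f : V → Fin ℓ → ℝ × ℝ, IsBoxRep G f :=
  ⟨fun ⟨f, h₁, h₂⟩ => ⟨f, h₁, h₂ _ _⟩,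
    fun ⟨f, h₁, h₂⟩ => ⟨f, h₁, fun _ _ => h₂⟩⟩

namespace IsBoxRep

variable {G : SimpleGraph V} {f : V → ι → ℝ × ℝ}

lemma comp_equiv (hf : IsBoxRep G f) (e : κ ≃ ι) : IsBoxRep G fun v k => f v (e k) where
  fst_le_snd v k := hf.fst_le_snd v (e k)
  adj_iff huv := (hf.adj_iff huv).trans e.forall_congr_right.symm

lemma comap {G' : SimpleGraph W} (hf : IsBoxRep G f) (φ : G' ↪g G) :
    IsBoxRep G' fun w => f (φ w) where
  fst_le_snd w := hf.fst_le_snd (φ w)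
  adj_iff huv := φ.map_adj_iff.symm.trans (hf.adj_iff (φ.injective.ne huv))

lemma restrict (hf : IsBoxRep G f) (s : Set ι)
    (hs : ∀ i ∉ s, ∀ u v, IntervalsMeet (f u i) (f v i)) :
    IsBoxRep G fun v (i : s) => f v i where
  fst_le_snd v i := hf.fst_le_snd v i
  adj_iff {u v} huv := by
    rw [hf.adj_iff huv]
    refine ⟨fun h i => h i, fun h i => ?_⟩
    by_cases hi : i ∈ s
    · exact h ⟨i, hi⟩
    · exact hs i hi u v

lemma boxicity_le [Fintype ι] [Nonempty ι] (hf : IsBoxRep G f) :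
    boxicity G ≤ Fintype.card ι :=
  Nat.sInf_le ⟨Fintype.card_pos, boxRep_iff.2 ⟨_, hf.comp_equiv (Fintype.equivFin ι).symm⟩⟩

end IsBoxRep

/-- Coordinate `w` separates `w` from exactly its non-neighbours. -/
def neighbourInterval (G : SimpleGraph V) [DecidableEq V] [DecidableRel G.Adj] (v w : V) :
    ℝ × ℝ :=
  if v = w then (0, 0) else if G.Adj v w then (0, 1) else (1, 1)

lemma isBoxRep_neighbourInterval (G : SimpleGraph V) [DecidableEq V] [DecidableRel G.Adj] :
    IsBoxRep G (neighbourInterval G) where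
  fst_le_snd v w := by unfold neighbourInterval; split_ifs <;> norm_num
  adj_iff {u v} huv := by
    refine ⟨fun h w => ?_, fun h => ?_⟩
    · by_cases hu : u = w
      · subst hu; simp [neighbourInterval, Ne.symm huv, h.symm]
      by_cases hv : v = w
      · subst hv; simp [neighbourInterval, huv, h]
      simp only [neighbourInterval, hu, hv, if_false]
      split_ifs <;> norm_num
    · have := h u
      by_contra hadj
      norm_num [neighbourInterval, Ne.symm huv, G.adj_comm, hadj] at this

lemma boxRep_boxicity [Fintype V] [Nonempty V] (G : SimpleGraph V) :
    BoxRep G (boxicity G) := by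
  classical
  refine (Nat.sInf_mem (s := {ℓ | 0 < ℓ ∧ BoxRep G ℓ})
    ⟨Fintype.card V, Fintype.card_pos, ?_⟩).2
  exact boxRep_iff.2 ⟨_, (isBoxRep_neighbourInterval G).comp_equiv (Fintype.equivFin V).symm⟩

open Classical in
noncomputable def separatingCoords [Fintype ι] (f : V → ι → ℝ × ℝ) : Finset ι :=
  univ.filter fun i => ∃ u v, ¬ IntervalsMeet (f u i) (f v i)

lemma IsBoxRep.boxicity_le_card_separatingCoords [Fintype ι] {G : SimpleGraph V}
    {f : V → ι → ℝ × ℝ} (hf : IsBoxRep G f) (hG : NotComplete G) :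
    boxicity G ≤ #(separatingCoords f) := by
  classical
  obtain ⟨a, b, hab, hGab⟩ := hG
  obtain ⟨i, hi⟩ : ∃ i, ¬ IntervalsMeet (f a i) (f b i) := by
    simpa [hf.adj_iff hab] using hGab
  have : Nonempty (separatingCoords f : Set ι) :=
    ⟨i, mem_coe.2 (mem_filter.2 ⟨mem_univ _, a, b, hi⟩)⟩
  have hrep := hf.restrict (separatingCoords f) fun i hi u v =>
    by_contra fun huv => hi (mem_coe.2 (mem_filter.2 ⟨mem_univ _, u, v, huv⟩))
  simpa using hrep.boxicity_le

section Join

variable {α β : Type*} {G : SimpleGraph α} {H : SimpleGraph β}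

@[simp]
lemma graphJoin_adj_inl_inl {a b : α} : (graphJoin G H).Adj (.inl a) (.inl b) ↔ G.Adj a b := by
  simp only [graphJoin, fromRel_adj, ne_eq, Sum.inl.injEq, G.adj_comm, or_self,
    and_iff_right_iff_imp]
  exact fun h => h.ne

@[simp]
lemma graphJoin_adj_inr_inr {a b : β} : (graphJoin G H).Adj (.inr a) (.inr b) ↔ H.Adj a b := by
  simp only [graphJoin, fromRel_adj, ne_eq, Sum.inr.injEq, H.adj_comm, or_self,
    and_iff_right_iff_imp]
  exact fun h => h.ne

@[simp]
lemma graphJoin_adj_inl_inr {a : α} {b : β} : (graphJoin G H).Adj (.inl a) (.inr b) := by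
  simp [graphJoin]

def graphJoin.inl : G ↪g graphJoin G H :=
  ⟨.inl, graphJoin_adj_inl_inl⟩

def graphJoin.inr : H ↪g graphJoin G H :=
  ⟨.inr, graphJoin_adj_inr_inr⟩

lemma IsBoxRep.disjoint_separatingCoords_join [Fintype ι] {f : α ⊕ β → ι → ℝ × ℝ}
    (hf : IsBoxRep (graphJoin G H) f) :
    Disjoint (separatingCoords fun a => f (.inl a)) (separatingCoords fun b => f (.inr b)) := by
  simp only [Finset.disjoint_left, separatingCoords, mem_filter, mem_univ, true_and]
  rintro i ⟨a, b, hab⟩ ⟨c, d, hcd⟩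
  have cross : ∀ a c, IntervalsMeet (f (.inl a) i) (f (.inr c) i) := fun a c =>
    (hf.adj_iff Sum.inl_ne_inr).1 graphJoin_adj_inl_inr i
  exact hab (.of_meet_disjoint_pair hcd (cross a c) (cross a d) (cross b c) (cross b d))

end Join

end BoxRepresentations

/-- If neither `G` nor `H` is complete, then `box(G ∨ H) ≥ box(G) + box(H)`. -/
theorem boxicity_join_ge {α β : Type*} [Fintype α] [Fintype β]
    (G : SimpleGraph α) (H : SimpleGraph β)
    (hG : NotComplete G) (hH : NotComplete H) :
    boxicity G + boxicity H ≤ boxicity (graphJoin G H) := by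
  have : Nonempty (α ⊕ β) := ⟨.inl hG.choose⟩
  obtain ⟨f, hf⟩ := boxRep_iff.1 (boxRep_boxicity (graphJoin G H))
  calc boxicity G + boxicity H
      ≤ #(separatingCoords fun a => f (.inl a)) + #(separatingCoords fun b => f (.inr b)) :=
        add_le_add ((hf.comap graphJoin.inl).boxicity_le_card_separatingCoords hG)
          ((hf.comap graphJoin.inr).boxicity_le_card_separatingCoords hH)
    _ = #(separatingCoords (fun a => f (.inl a)) ∪ separatingCoords fun b => f (.inr b)) :=
        (card_union_of_disjoint hf.disjoint_separatingCoords_join).symm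
    _ ≤ boxicity (graphJoin G H) := (card_le_univ _).trans_eq (Fintype.card_fin _)
end

section
/- The complete k-partite graph K_{n₁,…,n_k} with all part sizes n_i ≥ 2 has boxicity exactly k. -/
open SimpleGraph Finset

/-! In a box representation, the two ends of a non-edge have disjoint intervals in some
coordinate. Two vertices adjacent to both ends have intervals meeting both, hence both containing
the gap between them, so they meet each other there. Choosing a non-edge inside every part, the
separating coordinates of different parts must therefore differ, so there are at least `k`
coordinates. Conversely, a vertex of part `i` can be a point in coordinate `i` (distinct points
within a part) and `[0, 1]` in every other coordinate. -/

lemma max_le_min_of_meet_disjoint {I J K L : ℝ × ℝ} (hI : I.1 ≤ I.2) (hJ : J.1 ≤ J.2)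
    (hIJ : min I.2 J.2 < max I.1 J.1)
    (hKI : max K.1 I.1 ≤ min K.2 I.2) (hKJ : max K.1 J.1 ≤ min K.2 J.2)
    (hLI : max L.1 I.1 ≤ min L.2 I.2) (hLJ : max L.1 J.1 ≤ min L.2 J.2) :
    max K.1 L.1 ≤ min K.2 L.2 := by
  simp only [max_le_iff, le_min_iff, min_lt_iff, lt_max_iff] at *
  rcases hIJ with (h | h) | (h | h) <;> constructor <;> constructor <;> linarith

lemma card_le_of_boxRep_completeMultipartiteGraph {ι : Type*} [Fintype ι] {V : ι → Type*}
    [∀ i, Nontrivial (V i)] {ℓ : ℕ} (h : BoxRep (completeMultipartiteGraph V) ℓ) :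
    Fintype.card ι ≤ ℓ := by
  obtain ⟨f, hf, hadj⟩ := h
  have meet (u v : Σ i, V i) (huv : u.1 ≠ v.1) (c : Fin ℓ) :
      max (f u c).1 (f v c).1 ≤ min (f u c).2 (f v c).2 :=
    (hadj u v fun e => huv (congrArg Sigma.fst e)).mp huv c
  choose x y hxy using fun i => exists_pair_ne (V i)
  have hsep (i : ι) : ∃ c,
      min (f ⟨i, x i⟩ c).2 (f ⟨i, y i⟩ c).2 < max (f ⟨i, x i⟩ c).1 (f ⟨i, y i⟩ c).1 := by
    have hnadj : ¬ (completeMultipartiteGraph V).Adj ⟨i, x i⟩ ⟨i, y i⟩ := by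
      simp [completeMultipartiteGraph]
    simpa only [not_forall, not_le] using (hadj _ _ (by simpa using hxy i)).not.mp hnadj
  choose c hc using hsep
  have hinj : Function.Injective c := by
    intro i j hij
    by_contra hne
    refine (hc j).not_ge ?_
    rw [← hij]
    exact max_le_min_of_meet_disjoint (hf _ _) (hf _ _) (hc i) (meet _ _ (Ne.symm hne) _)
      (meet _ _ (Ne.symm hne) _) (meet _ _ (Ne.symm hne) _) (meet _ _ (Ne.symm hne) _)
  simpa using Fintype.card_le_of_injective c hinj

lemma exists_injective_mem_Icc_zero_one (α : Type*) [Countable α] :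
    ∃ g : α → ℝ, Function.Injective g ∧ ∀ a, g a ∈ Set.Icc 0 1 := by
  obtain ⟨e, he⟩ := Countable.exists_injective_nat α
  refine ⟨fun a => ((e a : ℝ) + 1)⁻¹, inv_injective.comp ((add_left_injective 1).comp
    (Nat.cast_injective.comp he)), fun a => ⟨by positivity, inv_le_one_of_one_le₀ (by simp)⟩⟩

lemma boxRep_completeMultipartiteGraph {k : ℕ} {V : Fin k → Type*} [∀ i, Countable (V i)] :
    BoxRep (completeMultipartiteGraph V) k := by
  choose g hg hg01 using fun i => exists_injective_mem_Icc_zero_one (V i)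
  refine ⟨fun v i => if v.1 = i then (g v.1 v.2, g v.1 v.2) else (0, 1), ?_, ?_⟩
  · intro v i
    dsimp only
    split_ifs <;> norm_num
  rintro ⟨i, a⟩ ⟨j, b⟩ hab
  simp only [completeMultipartiteGraph]
  constructor
  · intro hij c
    have := hg01 i a
    have := hg01 j b
    split_ifs <;> simp_all
  · rintro hmeet rfl
    have := hmeet i
    simp only [↓reduceIte, max_le_iff, le_min_iff] at this
    exact hab (congrArg _ (hg i (le_antisymm this.2.1 this.1.2)))

/-- The complete `k`-partite graph with all parts of size at least 2 has boxicity `k`. -/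
theorem boxicity_completeMultipartite (k : ℕ) (hk : 0 < k) (n : Fin k → ℕ)
    (hn : ∀ i, 2 ≤ n i) :
    boxicity (completeMultipartiteGraph (fun i : Fin k => Fin (n i))) = k := by
  have : ∀ i, Nontrivial (Fin (n i)) := fun i => Fin.nontrivial_iff_two_le.mpr (hn i)
  refine le_antisymm (Nat.sInf_le ⟨hk, boxRep_completeMultipartiteGraph⟩) ?_
  refine le_csInf ⟨k, hk, boxRep_completeMultipartiteGraph⟩ fun ℓ ⟨_, h⟩ => ?_
  simpa using card_le_of_boxRep_completeMultipartiteGraph h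
end

section
/- Let N = ∏_{i=1}^a p_i^{2n_i} · ∏_{j=1}^b q_j^{2m_j+1} be a composite number, where the p_i and q_j are distinct primes. Then the clique number and chromatic number of the compressed zero-divisor graph Γ_E(ℤ_N) both equal ∏_{i=1}^a (n_i+1) · ∏_{j=1}^b (m_j+1) + b − 1. -/
open SimpleGraph Finset

section ZDGAux

variable {a b : ℕ} (p : Fin a → ℕ) (q : Fin b → ℕ)

/-- The number with exponent vector `x` over the primes `p`, `q`. -/
def dval (x : (Fin a → ℕ) × (Fin b → ℕ)) : ℕ :=
  (∏ i, p i ^ x.1 i) * ∏ j, q j ^ x.2 j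

variable {p q}

lemma dval_ne_zero (hp : ∀ i, (p i).Prime) (hq : ∀ j, (q j).Prime)
    (x : (Fin a → ℕ) × (Fin b → ℕ)) : dval p q x ≠ 0 :=
  mul_ne_zero (Finset.prod_ne_zero_iff.mpr fun i _ => pow_ne_zero _ (hp i).ne_zero)
    (Finset.prod_ne_zero_iff.mpr fun j _ => pow_ne_zero _ (hq j).ne_zero)

lemma fac_dval (hp : ∀ i, (p i).Prime) (hq : ∀ j, (q j).Prime)
    (x : (Fin a → ℕ) × (Fin b → ℕ)) (r : ℕ) :
    (dval p q x).factorization r =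
      (∑ i, if p i = r then x.1 i else 0) + ∑ j, if q j = r then x.2 j else 0 := by
  have h1 : ∀ i ∈ (univ : Finset (Fin a)), p i ^ x.1 i ≠ 0 :=
    fun i _ => pow_ne_zero _ (hp i).ne_zero
  have h2 : ∀ j ∈ (univ : Finset (Fin b)), q j ^ x.2 j ≠ 0 :=
    fun j _ => pow_ne_zero _ (hq j).ne_zero
  rw [dval, Nat.factorization_mul (Finset.prod_ne_zero_iff.mpr h1)
      (Finset.prod_ne_zero_iff.mpr h2),
    Nat.factorization_prod h1, Nat.factorization_prod h2, Finsupp.add_apply,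
    Finset.sum_apply', Finset.sum_apply']
  congr 1
  · exact Finset.sum_congr rfl fun i _ => by
      rw [(hp i).factorization_pow, Finsupp.single_apply]
  · exact Finset.sum_congr rfl fun j _ => by
      rw [(hq j).factorization_pow, Finsupp.single_apply]

lemma fac_dval_p (hp : ∀ i, (p i).Prime) (hq : ∀ j, (q j).Prime)
    (hpinj : Function.Injective p) (hpq : ∀ i j, p i ≠ q j)
    (x : (Fin a → ℕ) × (Fin b → ℕ)) (i0 : Fin a) :
    (dval p q x).factorization (p i0) = x.1 i0 := by
  rw [fac_dval hp hq]
  have e1 : ∀ i ∈ (univ : Finset (Fin a)),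
      (if p i = p i0 then x.1 i else 0) = if i = i0 then x.1 i else 0 := by
    intro i _; simp [hpinj.eq_iff]
  have e2 : ∀ j ∈ (univ : Finset (Fin b)), (if q j = p i0 then x.2 j else 0) = 0 := by
    intro j _; exact if_neg fun h => hpq i0 j h.symm
  rw [Finset.sum_congr rfl e1, Finset.sum_congr rfl e2]
  simp

lemma fac_dval_q (hp : ∀ i, (p i).Prime) (hq : ∀ j, (q j).Prime)
    (hqinj : Function.Injective q) (hpq : ∀ i j, p i ≠ q j)
    (x : (Fin a → ℕ) × (Fin b → ℕ)) (j0 : Fin b) :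
    (dval p q x).factorization (q j0) = x.2 j0 := by
  rw [fac_dval hp hq]
  have e1 : ∀ i ∈ (univ : Finset (Fin a)), (if p i = q j0 then x.1 i else 0) = 0 := by
    intro i _; exact if_neg (hpq i j0)
  have e2 : ∀ j ∈ (univ : Finset (Fin b)),
      (if q j = q j0 then x.2 j else 0) = if j = j0 then x.2 j else 0 := by
    intro j _; simp [hqinj.eq_iff]
  rw [Finset.sum_congr rfl e1, Finset.sum_congr rfl e2]
  simp

lemma fac_dval_other (hp : ∀ i, (p i).Prime) (hq : ∀ j, (q j).Prime)
    (x : (Fin a → ℕ) × (Fin b → ℕ)) (r : ℕ) (hr1 : ∀ i, p i ≠ r) (hr2 : ∀ j, q j ≠ r) :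
    (dval p q x).factorization r = 0 := by
  rw [fac_dval hp hq]
  rw [Finset.sum_congr rfl fun i (_ : i ∈ univ) => if_neg (hr1 i),
    Finset.sum_congr rfl fun j (_ : j ∈ univ) => if_neg (hr2 j)]
  simp

lemma prod_succ_ge {ι : Type*} (E : Finset ι) (f : ι → ℕ) (hf : ∀ i, 1 ≤ f i) :
    (∏ i ∈ E, f i) + E.card ≤ ∏ i ∈ E, (f i + 1) := by
  classical
  induction E using Finset.induction_on with
  | empty => simp
  | @insert i E hiE ih =>
    rw [Finset.prod_insert hiE, Finset.prod_insert hiE, Finset.card_insert_of_notMem hiE]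
    have h1 : 1 ≤ ∏ i ∈ E, f i := Finset.one_le_prod' fun i _ => hf i
    nlinarith [ih, hf i]

end ZDGAux
set_option maxHeartbeats 1600000

/-- For `N = ∏ pᵢ^{2nᵢ} ∏ qⱼ^{2mⱼ+1}` composite, the clique number and the chromatic
number of `Γ_E(ℤ_N)` both equal `∏ (nᵢ+1) ∏ (mⱼ+1) + b - 1`. -/
theorem cliqueNum_chromaticNumber_divisorGraph (a b : ℕ)
    (p : Fin a → ℕ) (q : Fin b → ℕ) (n : Fin a → ℕ) (m : Fin b → ℕ)
    (hp : ∀ i, (p i).Prime) (hq : ∀ j, (q j).Prime)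
    (hpinj : Function.Injective p) (hqinj : Function.Injective q)
    (hpq : ∀ i j, p i ≠ q j) (hn : ∀ i, 0 < n i)
    (N : ℕ) (hN : N = (∏ i, p i ^ (2 * n i)) * ∏ j, q j ^ (2 * m j + 1))
    (hcomp : 1 < N ∧ ¬ N.Prime) :
    (divisorGraph N).cliqueNum = (∏ i, (n i + 1)) * (∏ j, (m j + 1)) + b - 1 ∧
    (divisorGraph N).chromaticNumber =
      (((∏ i, (n i + 1)) * (∏ j, (m j + 1)) + b - 1 : ℕ) : ℕ∞) := by
  classical
  obtain ⟨hN1, hNPr⟩ := hcomp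
  have hN0 : N ≠ 0 := by omega
  set P := (∏ i, (n i + 1)) * ∏ j, (m j + 1) with hP
  set vlo : (Fin a → ℕ) × (Fin b → ℕ) := (fun i => n i, fun j => m j + 1) with hvlo
  set vhi : (Fin a → ℕ) × (Fin b → ℕ) := (fun i => 2 * n i, fun j => 2 * m j + 1) with hvhi
  have hNd : N = dval p q vhi := by rw [hN]; rfl
  have hfp : ∀ x i0, (dval p q x).factorization (p i0) = x.1 i0 :=
    fun x i0 => fac_dval_p hp hq hpinj hpq x i0
  have hfq : ∀ x j0, (dval p q x).factorization (q j0) = x.2 j0 :=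
    fun x j0 => fac_dval_q hp hq hqinj hpq x j0
  have hNfp : ∀ i, N.factorization (p i) = 2 * n i := fun i => by
    rw [hNd]; exact hfp vhi i
  have hNfq : ∀ j, N.factorization (q j) = 2 * m j + 1 := fun j => by
    rw [hNd]; exact hfq vhi j
  have hNf0 : ∀ r, (∀ i, p i ≠ r) → (∀ j, q j ≠ r) → N.factorization r = 0 :=
    fun r h1 h2 => by rw [hNd]; exact fac_dval_other hp hq vhi r h1 h2
  have hdle : ∀ d : ℕ, d ∣ N → d ≠ 0 → ∀ r, d.factorization r ≤ N.factorization r :=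
    fun d hd hd0 r => Finsupp.le_def.mp ((Nat.factorization_le_iff_dvd hd0 hN0).mpr hd) r
  have hv0 : ∀ d : {d : ℕ // d ∣ N ∧ 1 < d ∧ d < N}, d.1 ≠ 0 := fun d => by
    have := d.2.2.1; omega
  have heqF : ∀ d e : {d : ℕ // d ∣ N ∧ 1 < d ∧ d < N},
      (∀ i, d.1.factorization (p i) = e.1.factorization (p i)) →
      (∀ j, d.1.factorization (q j) = e.1.factorization (q j)) → d = e := by
    intro d e h1 h2
    apply Subtype.ext
    apply Nat.eq_of_factorization_eq (hv0 d) (hv0 e)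
    intro r
    by_cases hr1 : ∃ i, p i = r
    · obtain ⟨i, rfl⟩ := hr1; exact h1 i
    by_cases hr2 : ∃ j, q j = r
    · obtain ⟨j, rfl⟩ := hr2; exact h2 j
    push_neg at hr1 hr2
    have hd := hdle d.1 d.2.1 (hv0 d) r
    have he := hdle e.1 e.2.1 (hv0 e) r
    rw [hNf0 r hr1 hr2] at hd he
    omega
  have hFne_top : ∀ d : {d : ℕ // d ∣ N ∧ 1 < d ∧ d < N},
      (∀ i, d.1.factorization (p i) = 2 * n i) →
      (∀ j, d.1.factorization (q j) = 2 * m j + 1) → False := by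
    intro d h1 h2
    have hdN : d.1 = N := by
      apply Nat.eq_of_factorization_eq (hv0 d) hN0
      intro r
      by_cases hr1 : ∃ i, p i = r
      · obtain ⟨i, rfl⟩ := hr1; rw [h1 i, hNfp i]
      by_cases hr2 : ∃ j, q j = r
      · obtain ⟨j, rfl⟩ := hr2; rw [h2 j, hNfq j]
      push_neg at hr1 hr2
      have hd := hdle d.1 d.2.1 (hv0 d) r
      rw [hNf0 r hr1 hr2] at hd ⊢
      omega
    exact absurd hdN (ne_of_lt d.2.2.2)
  have hadj : ∀ d e : {d : ℕ // d ∣ N ∧ 1 < d ∧ d < N},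
      (divisorGraph N).Adj d e ↔ d ≠ e ∧
        (∀ i, 2 * n i ≤ d.1.factorization (p i) + e.1.factorization (p i)) ∧
        (∀ j, 2 * m j + 1 ≤ d.1.factorization (q j) + e.1.factorization (q j)) := by
    have hchar : ∀ u v : {d : ℕ // d ∣ N ∧ 1 < d ∧ d < N}, N ∣ u.1 * v.1 ↔
        (∀ i, 2 * n i ≤ u.1.factorization (p i) + v.1.factorization (p i)) ∧
        (∀ j, 2 * m j + 1 ≤ u.1.factorization (q j) + v.1.factorization (q j)) := by
      intro u v
      rw [← Nat.factorization_le_iff_dvd hN0 (mul_ne_zero (hv0 u) (hv0 v)),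
        Nat.factorization_mul (hv0 u) (hv0 v), Finsupp.le_def]
      constructor
      · intro h
        refine ⟨fun i => ?_, fun j => ?_⟩
        · have hh := h (p i); rw [hNfp i, Finsupp.add_apply] at hh; exact hh
        · have hh := h (q j); rw [hNfq j, Finsupp.add_apply] at hh; exact hh
      · intro h r
        rw [Finsupp.add_apply]
        by_cases hr1 : ∃ i, p i = r
        · obtain ⟨i, rfl⟩ := hr1; rw [hNfp i]; exact h.1 i
        by_cases hr2 : ∃ j, q j = r
        · obtain ⟨j, rfl⟩ := hr2; rw [hNfq j]; exact h.2 j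
        push_neg at hr1 hr2
        rw [hNf0 r hr1 hr2]; omega
    intro d e
    constructor
    · intro hAdj
      rw [divisorGraph, SimpleGraph.fromRel_adj] at hAdj
      obtain ⟨hne, h | h⟩ := hAdj
      · exact ⟨hne, (hchar d e).mp h⟩
      · rw [mul_comm] at h; exact ⟨hne, (hchar d e).mp h⟩
    · rintro ⟨hne, h⟩
      rw [divisorGraph, SimpleGraph.fromRel_adj]
      exact ⟨hne, Or.inl ((hchar d e).mpr h)⟩
  -- basic positivity facts
  have hP1 : 1 ≤ P := by
    rw [hP]
    have h1 : 0 < ∏ i, (n i + 1) := Finset.prod_pos fun i _ => by omega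
    have h2 : 0 < ∏ j, (m j + 1) := Finset.prod_pos fun j _ => by omega
    exact Nat.mul_pos h1 h2
  have hab : a = 0 → b = 0 → False := by
    intro ha hb
    subst ha; subst hb
    simp at hN
    omega
  -- generic vertex constructor
  have hvert : ∀ x : (Fin a → ℕ) × (Fin b → ℕ), (∀ i, x.1 i ≤ 2 * n i) →
      (∀ j, x.2 j ≤ 2 * m j + 1) → dval p q x ≠ 1 → dval p q x ≠ N →
      dval p q x ∣ N ∧ 1 < dval p q x ∧ dval p q x < N := by
    intro x h1 h2 hne1 hneN
    have hdvd : dval p q x ∣ N := by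
      rw [hNd]
      exact mul_dvd_mul
        (Finset.prod_dvd_prod_of_dvd _ _ fun i _ => pow_dvd_pow _ (h1 i))
        (Finset.prod_dvd_prod_of_dvd _ _ fun j _ => pow_dvd_pow _ (h2 j))
    have h0 := dval_ne_zero hp hq x
    have hlt : dval p q x < N := lt_of_le_of_ne (Nat.le_of_dvd (by omega) hdvd) hneN
    exact ⟨hdvd, by omega, hlt⟩
  have hne1' : ∀ x : (Fin a → ℕ) × (Fin b → ℕ),
      (∃ i, 0 < x.1 i) ∨ (∃ j, 0 < x.2 j) → dval p q x ≠ 1 := by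
    intro x hx h1
    rcases hx with ⟨i, hi'⟩ | ⟨j, hj'⟩
    · have h := hfp x i; rw [h1, Nat.factorization_one] at h; simp at h; omega
    · have h := hfq x j; rw [h1, Nat.factorization_one] at h; simp at h; omega
  have hneN' : ∀ x : (Fin a → ℕ) × (Fin b → ℕ),
      ((∃ i, x.1 i ≠ 2 * n i) ∨ (∃ j, x.2 j ≠ 2 * m j + 1)) → dval p q x ≠ N := by
    intro x hx h
    rcases hx with ⟨i, hi'⟩ | ⟨j, hj'⟩
    · exact hi' (by rw [← hfp x i, h, hNfp])
    · exact hj' (by rw [← hfq x j, h, hNfq])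
  -- interval facts
  have hlohi : vlo ≤ vhi := by
    rw [Prod.le_def, Pi.le_def, Pi.le_def]
    refine ⟨fun i => ?_, fun j => ?_⟩ <;> simp only [hvlo, hvhi] <;> omega
  have hhi_mem : vhi ∈ Finset.Icc vlo vhi := Finset.mem_Icc.mpr ⟨hlohi, le_refl vhi⟩
  have hcard_Icc : (Finset.Icc vlo vhi).card = P := by
    rw [Finset.card_Icc_prod, Pi.card_Icc, Pi.card_Icc, hP]
    simp only [hvlo, hvhi, Nat.card_Icc]
    congr 1
    · exact Finset.prod_congr rfl fun i _ => by omega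
    · exact Finset.prod_congr rfl fun j _ => by omega
  -- vertices from the box
  have hmem_vert : ∀ x ∈ (Finset.Icc vlo vhi).erase vhi,
      dval p q x ∣ N ∧ 1 < dval p q x ∧ dval p q x < N := by
    intro x hx
    rw [Finset.mem_erase, Finset.mem_Icc] at hx
    obtain ⟨hxne, hxlo, hxhi⟩ := hx
    rw [Prod.le_def, Pi.le_def, Pi.le_def] at hxlo hxhi
    apply hvert x (fun i => hxhi.1 i) (fun j => hxhi.2 j)
    · apply hne1'
      rcases Nat.eq_zero_or_pos a with ha | ha
      · rcases Nat.eq_zero_or_pos b with hb | hb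
        · exact (hab ha hb).elim
        · refine Or.inr ⟨⟨0, hb⟩, ?_⟩
          have hx2 := hxlo.2 ⟨0, hb⟩
          simp only [hvlo] at hx2
          omega
      · refine Or.inl ⟨⟨0, ha⟩, ?_⟩
        have hx1 := hxlo.1 ⟨0, ha⟩
        have := hn ⟨0, ha⟩
        simp only [hvlo] at hx1
        omega
    · apply hneN'
      by_contra hcon
      push_neg at hcon
      exact hxne (Prod.ext_iff.mpr ⟨funext hcon.1, funext hcon.2⟩)
  set xj : Fin b → (Fin a → ℕ) × (Fin b → ℕ) :=
    fun j => (fun i => n i, fun j' => if j' = j then m j else m j' + 1) with hxj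
  have hxjvert : ∀ j, dval p q (xj j) ∣ N ∧ 1 < dval p q (xj j) ∧ dval p q (xj j) < N := by
    intro j
    apply hvert
    · intro i; simp only [hxj]; omega
    · intro j'; simp only [hxj]
      split_ifs with h
      · subst h; omega
      · omega
    · apply hne1'
      rcases Nat.eq_zero_or_pos a with ha | ha
      · by_cases hex : ∃ j', j' ≠ j
        · obtain ⟨j', hj'⟩ := hex
          refine Or.inr ⟨j', ?_⟩
          simp [hxj, hj'] <;> omega
        · push_neg at hex
          by_cases hm : 0 < m j
          · refine Or.inr ⟨j, ?_⟩
            simp [hxj] <;> omega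
          · exfalso
            have hmj : m j = 0 := by omega
            have hNq : N = q j := by
              rw [hN]
              subst ha
              rw [Finset.univ_eq_empty, Finset.prod_empty, one_mul]
              rw [Fintype.prod_eq_single j (fun j' hj' => absurd (hex j') hj'), hmj]
              norm_num
            exact hNPr (hNq ▸ hq j)
      · exact Or.inl ⟨⟨0, ha⟩, hn ⟨0, ha⟩⟩
    · apply hneN'
      refine Or.inr ⟨j, ?_⟩
      simp [hxj] <;> omega
  -- the clique
  have hdval_inj : Function.Injective (dval p q) := by
    intro x y hxy
    have h1 : ∀ i, x.1 i = y.1 i := fun i => by rw [← hfp x i, hxy, hfp]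
    have h2 : ∀ j, x.2 j = y.2 j := fun j => by rw [← hfq x j, hxy, hfq]
    exact Prod.ext_iff.mpr ⟨funext h1, funext h2⟩
  have hmk_inj : Function.Injective (fun x : {x // x ∈ (Finset.Icc vlo vhi).erase vhi} =>
      (⟨dval p q x.1, hmem_vert x.1 x.2⟩ : {d : ℕ // d ∣ N ∧ 1 < d ∧ d < N})) := by
    intro x y hxy
    exact Subtype.ext (hdval_inj (congrArg Subtype.val hxy))
  have hxjmk_inj : Function.Injective (fun j : Fin b =>
      (⟨dval p q (xj j), hxjvert j⟩ : {d : ℕ // d ∣ N ∧ 1 < d ∧ d < N})) := by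
    intro j j' hjj'
    have hxx := hdval_inj (congrArg Subtype.val hjj')
    by_contra hne
    have h := congrArg (fun z => z.2 j) hxx
    simp [hxj, hne] at h
  set S1 : Finset {d : ℕ // d ∣ N ∧ 1 < d ∧ d < N} :=
    ((Finset.Icc vlo vhi).erase vhi).attach.image
      (fun x => ⟨dval p q x.1, hmem_vert x.1 x.2⟩) with hS1
  set S2 : Finset {d : ℕ // d ∣ N ∧ 1 < d ∧ d < N} :=
    Finset.univ.image (fun j : Fin b => ⟨dval p q (xj j), hxjvert j⟩) with hS2
  have hS1card : S1.card = P - 1 := by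
    rw [hS1, Finset.card_image_of_injective _ hmk_inj, Finset.card_attach,
      Finset.card_erase_of_mem hhi_mem, hcard_Icc]
  have hS2card : S2.card = b := by
    rw [hS2, Finset.card_image_of_injective _ hxjmk_inj, Finset.card_univ, Fintype.card_fin]
  have hdisj : Disjoint S1 S2 := by
    rw [Finset.disjoint_left]
    rintro v hv1 hv2
    rw [hS1, Finset.mem_image] at hv1
    rw [hS2, Finset.mem_image] at hv2
    obtain ⟨x, _, hvx⟩ := hv1
    obtain ⟨j, _, hvj⟩ := hv2
    have hval : dval p q x.1 = dval p q (xj j) := congrArg Subtype.val (hvx.trans hvj.symm)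
    have hxx := hdval_inj hval
    have hxmem := x.2
    rw [Finset.mem_erase, Finset.mem_Icc] at hxmem
    have hlo2 := hxmem.2.1
    rw [Prod.le_def, Pi.le_def, Pi.le_def] at hlo2
    have h1 := hlo2.2 j
    have h2 : x.1.2 j = m j := by rw [hxx]; simp [hxj]
    simp only [hvlo] at h1
    omega
  have hScard : (S1 ∪ S2).card = P - 1 + b := by
    rw [Finset.card_union_of_disjoint hdisj, hS1card, hS2card]
  have hSfac : ∀ u ∈ S1 ∪ S2,
      (∀ i, n i ≤ u.1.factorization (p i)) ∧ (∀ j, m j ≤ u.1.factorization (q j)) ∧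
      (∀ j, u.1.factorization (q j) = m j → u = ⟨dval p q (xj j), hxjvert j⟩) := by
    intro u hu
    rw [Finset.mem_union] at hu
    rcases hu with hu | hu
    · rw [hS1, Finset.mem_image] at hu
      obtain ⟨x, -, rfl⟩ := hu
      have hxmem := x.2
      rw [Finset.mem_erase, Finset.mem_Icc] at hxmem
      have hxlo := hxmem.2.1
      rw [Prod.le_def, Pi.le_def, Pi.le_def] at hxlo
      refine ⟨fun i => ?_, fun j => ?_, fun j hj => ?_⟩
      · have h := hxlo.1 i
        simp only [hvlo] at h
        simp only [hfp]
        omega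
      · have h := hxlo.2 j
        simp only [hvlo] at h
        simp only [hfq]
        omega
      · exfalso
        have h := hxlo.2 j
        simp only [hvlo] at h
        simp only [hfq] at hj
        omega
    · rw [hS2, Finset.mem_image] at hu
      obtain ⟨j0, -, rfl⟩ := hu
      refine ⟨fun i => ?_, fun j => ?_, fun j hj => ?_⟩
      · simp [hfp, hxj]
      · simp only [hfq, hxj]
        by_cases h : j = j0
        · simp [h] <;> omega
        · simp [h] <;> omega
      · simp only [hfq, hxj] at hj
        by_cases h : j = j0
        · subst h; rfl
        · simp [h] at hj <;> omega
  have hSclique : (divisorGraph N).IsClique (↑(S1 ∪ S2)) := by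
    intro u hu v hv huv
    rw [hadj]
    obtain ⟨hu1, hu2, hu3⟩ := hSfac u (Finset.mem_coe.mp hu)
    obtain ⟨hv1, hv2, hv3⟩ := hSfac v (Finset.mem_coe.mp hv)
    refine ⟨huv, fun i => ?_, fun j => ?_⟩
    · have := hu1 i; have := hv1 i; omega
    · have hu' := hu2 j; have hv' := hv2 j
      rcases Nat.lt_or_ge (u.1.factorization (q j)) (m j + 1) with h1 | h1
      · rcases Nat.lt_or_ge (v.1.factorization (q j)) (m j + 1) with h2 | h2
        · exact absurd ((hu3 j (by omega)).trans (hv3 j (by omega)).symm) huv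
        · omega
      · rcases Nat.lt_or_ge (v.1.factorization (q j)) (m j + 1) with h2 | h2
        · omega
        · omega
  -- upper bound for cliques
  have hub : ∀ s : Finset {d : ℕ // d ∣ N ∧ 1 < d ∧ d < N},
      (divisorGraph N).IsClique ↑s → s.card ≤ P - 1 + b := by
    intro s hs
    set DefP : {d : ℕ // d ∣ N ∧ 1 < d ∧ d < N} → Prop := fun d =>
      (∃ i, d.1.factorization (p i) < n i) ∨ (∃ j, d.1.factorization (q j) < m j + 1)
      with hDefP
    set E : Finset (Fin a) :=
      univ.filter (fun i => ∃ d ∈ s, d.1.factorization (p i) < n i) with hE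
    set O : Finset (Fin b) :=
      univ.filter (fun j => ∃ d ∈ s, d.1.factorization (q j) < m j + 1) with hO
    have hsplit := Finset.card_filter_add_card_filter_not (s := s) (p := DefP)
    have hDefb : (s.filter DefP).card ≤ E.card + O.card := by
      have hstep : (s.filter DefP).card ≤ ((E.disjSum O).image some).card := by
        apply Finset.card_le_card_of_injOn (fun d =>
          if h : ∃ i, d.1.factorization (p i) < n i then some (Sum.inl h.choose)
          else if h2 : ∃ j, d.1.factorization (q j) < m j + 1 then some (Sum.inr h2.choose)
          else none)
        · intro d hd
          rw [Finset.mem_coe, Finset.mem_filter] at hd; rw [Finset.mem_coe]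
          dsimp only
          split_ifs with h1 h2
          · exact Finset.mem_image_of_mem _ (Finset.inl_mem_disjSum.mpr (by
              rw [hE, Finset.mem_filter]
              exact ⟨Finset.mem_univ _, d, hd.1, h1.choose_spec⟩))
          · exact Finset.mem_image_of_mem _ (Finset.inr_mem_disjSum.mpr (by
              rw [hO, Finset.mem_filter]
              exact ⟨Finset.mem_univ _, d, hd.1, h2.choose_spec⟩))
          · have hdd := hd.2
            simp only [hDefP] at hdd
            rcases hdd with h | h
            · exact absurd h h1
            · exact absurd h h2
        · intro d hd e he hde
          have hd' := Finset.mem_coe.mp hd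
          have he' := Finset.mem_coe.mp he
          rw [Finset.mem_filter] at hd' he'
          have hdDef := hd'.2
          have heDef := he'.2
          simp only [hDefP] at hdDef heDef
          by_contra hne
          have hAdj := (hadj d e).mp (hs (Finset.mem_coe.mpr hd'.1) (Finset.mem_coe.mpr he'.1) hne)
          beta_reduce at hde
          by_cases hA1 : ∃ i, d.1.factorization (p i) < n i
          · rw [dif_pos hA1] at hde
            by_cases hB1 : ∃ i, e.1.factorization (p i) < n i
            · rw [dif_pos hB1] at hde
              rw [Option.some.injEq, Sum.inl.injEq] at hde
              have hsd := hA1.choose_spec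
              have hse := hB1.choose_spec
              rw [hde] at hsd
              have := hAdj.2.1 hB1.choose
              omega
            · rw [dif_neg hB1] at hde
              rcases heDef with h | h
              · exact hB1 h
              · rw [dif_pos h] at hde
                simp at hde
          · rw [dif_neg hA1] at hde
            rcases hdDef with h | h
            · exact hA1 h
            · rw [dif_pos h] at hde
              by_cases hB1 : ∃ i, e.1.factorization (p i) < n i
              · rw [dif_pos hB1] at hde
                simp at hde
              · rw [dif_neg hB1] at hde
                rcases heDef with h' | h'
                · exact hB1 h'
                · rw [dif_pos h'] at hde
                  rw [Option.some.injEq, Sum.inr.injEq] at hde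
                  have hsd := h.choose_spec
                  have hse := h'.choose_spec
                  rw [hde] at hsd
                  have := hAdj.2.2 h'.choose
                  omega
      rw [Finset.card_image_of_injective _ (Option.some_injective _),
        Finset.card_disjSum] at hstep
      exact hstep
    have hBigb : (s.filter fun d => ¬ DefP d).card ≤
        (∏ i, (if i ∈ E then n i else n i + 1)) * (∏ j, (m j + 1)) - 1 := by
      set loE : (Fin a → ℕ) × (Fin b → ℕ) :=
        (fun i => if i ∈ E then n i + 1 else n i, fun j => m j + 1) with hloE
      have hloEhi : loE ≤ vhi := by
        rw [Prod.le_def, Pi.le_def, Pi.le_def]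
        constructor
        · intro i; simp only [hloE, hvhi]; have := hn i; split_ifs <;> omega
        · intro j; simp only [hloE, hvhi]; omega
      have hhiIcc : vhi ∈ Finset.Icc loE vhi := Finset.mem_Icc.mpr ⟨hloEhi, le_refl vhi⟩
      have hstep : (s.filter fun d => ¬ DefP d).card ≤ ((Finset.Icc loE vhi).erase vhi).card := by
        apply Finset.card_le_card_of_injOn
          (fun d => ((fun i => d.1.factorization (p i), fun j => d.1.factorization (q j)) :
            (Fin a → ℕ) × (Fin b → ℕ)))
        · intro d hd
          rw [Finset.mem_coe, Finset.mem_filter] at hd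
          obtain ⟨hds, hnd⟩ := hd
          simp only [hDefP] at hnd
          push_neg at hnd
          obtain ⟨hnd1, hnd2⟩ := hnd
          rw [Finset.mem_coe, Finset.mem_erase]
          constructor
          · intro hEq
            refine hFne_top d (fun i => ?_) (fun j => ?_)
            · have hh := congrArg (fun z => z.1 i) hEq
              simpa only [hvhi] using hh
            · have hh := congrArg (fun z => z.2 j) hEq
              simpa only [hvhi] using hh
          · rw [Finset.mem_Icc, Prod.le_def, Pi.le_def, Pi.le_def, Prod.le_def,
              Pi.le_def, Pi.le_def]
            refine ⟨⟨fun i => ?_, fun j => ?_⟩, ⟨fun i => ?_, fun j => ?_⟩⟩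
            · simp only [hloE]
              split_ifs with hiE
              · rw [hE, Finset.mem_filter] at hiE
                obtain ⟨-, d0, hd0s, hd0i⟩ := hiE
                have hne : d0 ≠ d := by
                  intro hcon; rw [hcon] at hd0i; exact absurd hd0i (not_lt.mpr (hnd1 i))
                have hAdj := (hadj d0 d).mp
                  (hs (Finset.mem_coe.mpr hd0s) (Finset.mem_coe.mpr hds) hne)
                have := hAdj.2.1 i
                omega
              · exact hnd1 i
            · simp only [hloE]; exact hnd2 j
            · simp only [hvhi]
              have hh := hdle d.1 d.2.1 (hv0 d) (p i); rw [hNfp i] at hh; exact hh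
            · simp only [hvhi]
              have hh := hdle d.1 d.2.1 (hv0 d) (q j); rw [hNfq j] at hh; exact hh
        · intro d hd e he hde
          exact heqF d e (fun i => congrArg (fun z => z.1 i) hde)
            (fun j => congrArg (fun z => z.2 j) hde)
      have hcardE : ((Finset.Icc loE vhi).erase vhi).card =
          (∏ i, (if i ∈ E then n i else n i + 1)) * (∏ j, (m j + 1)) - 1 := by
        rw [Finset.card_erase_of_mem hhiIcc, Finset.card_Icc_prod, Pi.card_Icc, Pi.card_Icc]
        congr 1
        congr 1
        · refine Finset.prod_congr rfl fun i _ => ?_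
          simp only [hloE, hvhi, Nat.card_Icc]
          split_ifs <;> omega
        · refine Finset.prod_congr rfl fun j _ => ?_
          simp only [hloE, hvhi, Nat.card_Icc]
          omega
      omega
    have hM1 : 1 ≤ ∏ j, (m j + 1) := Finset.one_le_prod' fun j _ => by omega
    have hR1 : 1 ≤ ∏ i ∈ univ \ E, (n i + 1) := Finset.one_le_prod' fun i _ => by omega
    have hsp1 : (∏ i ∈ univ \ E, (if i ∈ E then n i else n i + 1)) *
        (∏ i ∈ E, (if i ∈ E then n i else n i + 1)) =
        ∏ i, (if i ∈ E then n i else n i + 1) :=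
      Finset.prod_sdiff (Finset.subset_univ E)
    have hsp2 : (∏ i ∈ univ \ E, (n i + 1)) * (∏ i ∈ E, (n i + 1)) = ∏ i, (n i + 1) :=
      Finset.prod_sdiff (Finset.subset_univ E)
    have he1 : ∏ i ∈ E, (if i ∈ E then n i else n i + 1) = ∏ i ∈ E, n i :=
      Finset.prod_congr rfl fun i hi' => if_pos hi'
    have he2 : ∏ i ∈ univ \ E, (if i ∈ E then n i else n i + 1) = ∏ i ∈ univ \ E, (n i + 1) :=
      Finset.prod_congr rfl fun i hi' => if_neg (Finset.mem_sdiff.mp hi').2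
    have hkey := prod_succ_ge E n (fun i => hn i)
    have hprod_le : (∏ i, (if i ∈ E then n i else n i + 1)) + E.card ≤ ∏ i, (n i + 1) := by
      rw [← hsp1, ← hsp2, he2]
      nlinarith [hkey, hR1]
    have hKP : (∏ i, (if i ∈ E then n i else n i + 1)) * (∏ j, (m j + 1)) + E.card ≤ P := by
      have h1 : ((∏ i, (if i ∈ E then n i else n i + 1)) + E.card) * (∏ j, (m j + 1)) ≤
          (∏ i, (n i + 1)) * (∏ j, (m j + 1)) := Nat.mul_le_mul_right _ hprod_le
      have h2 : E.card * 1 ≤ E.card * (∏ j, (m j + 1)) := Nat.mul_le_mul_left _ hM1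
      rw [hP]
      nlinarith [h1, h2]
    have hK1 : 1 ≤ (∏ i, (if i ∈ E then n i else n i + 1)) * (∏ j, (m j + 1)) := by
      have h1 : 0 < ∏ i, (if i ∈ E then n i else n i + 1) :=
        Finset.prod_pos fun i _ => by have := hn i; split_ifs <;> omega
      have h2 : 0 < ∏ j, (m j + 1) := Finset.prod_pos fun j _ => by omega
      exact Nat.mul_pos h1 h2
    have hOb : O.card ≤ b := by
      have hh := Finset.card_le_card (Finset.subset_univ O)
      simpa using hh
    omega
  -- coloring
  have hbvec_mem : ∀ i0 : Fin a,
      ((fun i => if i = i0 then n i0 else 2 * n i, fun j => 2 * m j + 1) :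
        (Fin a → ℕ) × (Fin b → ℕ)) ∈ (Finset.Icc vlo vhi).erase vhi := by
    intro i0
    rw [Finset.mem_erase]
    constructor
    · intro hcon
      have hh := congrArg (fun z => z.1 i0) hcon
      simp [hvhi] at hh
      have := hn i0; omega
    · rw [Finset.mem_Icc, Prod.le_def, Pi.le_def, Pi.le_def, Prod.le_def, Pi.le_def, Pi.le_def]
      refine ⟨⟨fun i => ?_, fun j => ?_⟩, ⟨fun i => ?_, fun j => ?_⟩⟩
      · simp only [hvlo]
        split_ifs with h
        · subst h; omega
        · omega
      · simp only [hvlo]; omega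
      · simp only [hvhi]
        split_ifs with h
        · subst h; omega
        · omega
      · simp only [hvhi]; omega
  have hbig_mem : ∀ d : {d : ℕ // d ∣ N ∧ 1 < d ∧ d < N},
      ¬(∃ i, d.1.factorization (p i) < n i) → ¬(∃ j, d.1.factorization (q j) < m j + 1) →
      ((fun i => d.1.factorization (p i), fun j => d.1.factorization (q j)) :
        (Fin a → ℕ) × (Fin b → ℕ)) ∈ (Finset.Icc vlo vhi).erase vhi := by
    intro d h1 h2
    push_neg at h1 h2
    rw [Finset.mem_erase]
    constructor
    · intro hEq
      refine hFne_top d (fun i => ?_) (fun j => ?_)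
      · have hh := congrArg (fun z => z.1 i) hEq
        simpa only [hvhi] using hh
      · have hh := congrArg (fun z => z.2 j) hEq
        simpa only [hvhi] using hh
    · rw [Finset.mem_Icc, Prod.le_def, Pi.le_def, Pi.le_def, Prod.le_def, Pi.le_def, Pi.le_def]
      refine ⟨⟨fun i => ?_, fun j => ?_⟩, ⟨fun i => ?_, fun j => ?_⟩⟩
      · simp only [hvlo]; exact h1 i
      · simp only [hvlo]; exact h2 j
      · simp only [hvhi]
        have hh := hdle d.1 d.2.1 (hv0 d) (p i); rw [hNfp i] at hh; exact hh
      · simp only [hvhi]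
        have hh := hdle d.1 d.2.1 (hv0 d) (q j); rw [hNfq j] at hh; exact hh
  have hcolorable : (divisorGraph N).Colorable (P - 1 + b) := by
    have C : (divisorGraph N).Coloring
        ({x // x ∈ (Finset.Icc vlo vhi).erase vhi} ⊕ Fin b) := by
      apply SimpleGraph.Coloring.mk (fun d =>
        if h1 : ∃ i, d.1.factorization (p i) < n i then
          Sum.inl ⟨_, hbvec_mem h1.choose⟩
        else if h2 : ∃ j, d.1.factorization (q j) < m j + 1 then Sum.inr h2.choose
        else Sum.inl ⟨_, hbig_mem d h1 h2⟩)
      intro d e hAdj hcol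
      obtain ⟨hne, hsp, hsq⟩ := (hadj d e).mp hAdj
      by_cases hA1 : ∃ i, d.1.factorization (p i) < n i
      · rw [dif_pos hA1] at hcol
        by_cases hB1 : ∃ i, e.1.factorization (p i) < n i
        · rw [dif_pos hB1] at hcol
          rw [Sum.inl.injEq, Subtype.mk.injEq] at hcol
          have hii : hA1.choose = hB1.choose := by
            by_contra hcc
            have hh := congrArg (fun z => z.1 hA1.choose) hcol
            simp [hcc] at hh
            have := hn hA1.choose
            omega
          have hsd := hA1.choose_spec
          have hse := hB1.choose_spec
          rw [← hii] at hse
          have := hsp hA1.choose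
          omega
        · rw [dif_neg hB1] at hcol
          by_cases hB2 : ∃ j, e.1.factorization (q j) < m j + 1
          · rw [dif_pos hB2] at hcol
            simp at hcol
          · rw [dif_neg hB2] at hcol
            rw [Sum.inl.injEq, Subtype.mk.injEq] at hcol
            have hh := congrArg (fun z => z.1 hA1.choose) hcol
            simp at hh
            have hsd := hA1.choose_spec
            have := hsp hA1.choose
            omega
      · rw [dif_neg hA1] at hcol
        by_cases hA2 : ∃ j, d.1.factorization (q j) < m j + 1
        · rw [dif_pos hA2] at hcol
          by_cases hB1 : ∃ i, e.1.factorization (p i) < n i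
          · rw [dif_pos hB1] at hcol
            simp at hcol
          · rw [dif_neg hB1] at hcol
            by_cases hB2 : ∃ j, e.1.factorization (q j) < m j + 1
            · rw [dif_pos hB2] at hcol
              rw [Sum.inr.injEq] at hcol
              have hsd := hA2.choose_spec
              have hse := hB2.choose_spec
              rw [hcol] at hsd
              have := hsq hB2.choose
              omega
            · rw [dif_neg hB2] at hcol
              simp at hcol
        · rw [dif_neg hA2] at hcol
          by_cases hB1 : ∃ i, e.1.factorization (p i) < n i
          · rw [dif_pos hB1] at hcol
            rw [Sum.inl.injEq, Subtype.mk.injEq] at hcol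
            have hh := congrArg (fun z => z.1 hB1.choose) hcol
            simp at hh
            have hse := hB1.choose_spec
            have := hsp hB1.choose
            omega
          · rw [dif_neg hB1] at hcol
            by_cases hB2 : ∃ j, e.1.factorization (q j) < m j + 1
            · rw [dif_pos hB2] at hcol
              simp at hcol
            · rw [dif_neg hB2] at hcol
              rw [Sum.inl.injEq, Subtype.mk.injEq] at hcol
              exact hne (heqF d e (fun i => congrArg (fun z => z.1 i) hcol)
                (fun j => congrArg (fun z => z.2 j) hcol))
    have hcb := C.colorable
    rwa [Fintype.card_sum, Fintype.card_coe, Finset.card_erase_of_mem hhi_mem, hcard_Icc,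
      Fintype.card_fin] at hcb
  -- conclusion
  have hclique_eq : (divisorGraph N).cliqueNum = P - 1 + b := by
    have hubset : (P - 1 + b) ∈ upperBounds {k | ∃ t, (divisorGraph N).IsNClique k t} := by
      rintro k ⟨t, ht⟩
      rw [← ht.2]
      exact hub t ht.1
    apply le_antisymm
    · exact csSup_le ⟨0, ∅, SimpleGraph.isNClique_empty.mpr rfl⟩ hubset
    · exact le_csSup ⟨P - 1 + b, hubset⟩ ⟨S1 ∪ S2, hSclique, hScard⟩
  have hchrom_eq : (divisorGraph N).chromaticNumber = ((P - 1 + b : ℕ) : ℕ∞) := by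
    apply le_antisymm
    · exact hcolorable.chromaticNumber_le
    · have hh := hSclique.card_le_chromaticNumber
      rwa [hScard] at hh
  constructor
  · rw [hclique_eq]; omega
  · rw [hchrom_eq]
    exact congrArg (fun k : ℕ => (k : ℕ∞)) (by omega)
end

section
/- For every prime p and integer n ≥ 2, the zero-divisor graph Γ(ℤ_{p^n}) is an interval graph, i.e., box(Γ(ℤ_{p^n})) = 1. -/
/-!
A nonzero zero-divisor `x` of `ℤ/pⁿ` has `p`-adic valuation `a(x)` (of its least residue), and
`xy = 0` iff `a(x) + a(y) ≥ n`. Choose distinct `ε(x) ∈ [0, 1)` and give `x` the interval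
`[ℓ(x), max(a(x), ℓ(x))]` with `ℓ(x) = n - a(x) - ε(x)`. Two such intervals meet iff
`ℓ(x) ≤ a(y)` or `ℓ(x) = ℓ(y)`; by integrality the first says `a(x) + a(y) ≥ n`, and the second
forces `x = y`.
-/

open SimpleGraph Finset

lemma intCast_le_iff_nonpos_of_mem_Ico {k : ℤ} {e : ℝ} (he : e ∈ Set.Ico 0 1) :
    (k : ℝ) ≤ e ↔ k ≤ 0 := by
  obtain ⟨he0, he1⟩ := he
  constructor
  · intro h
    by_contra! hk
    have : (1 : ℝ) ≤ k := by exact_mod_cast hk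
    linarith
  · intro hk
    have : (k : ℝ) ≤ 0 := by exact_mod_cast hk
    linarith

lemma max_le_min_iff_of_le {α : Type*} [LinearOrder α] {l₁ h₁ l₂ h₂ : α} (h₁₁ : l₁ ≤ h₁)
    (h₂₂ : l₂ ≤ h₂) : max l₁ l₂ ≤ min h₁ h₂ ↔ l₁ ≤ h₂ ∧ l₂ ≤ h₁ := by
  simp only [max_le_iff, le_min_iff, h₁₁, h₂₂, true_and, and_true]
  exact and_comm

theorem isIntervalGraph_of_adj_iff_le_add {V : Type*} (G : SimpleGraph V) (n : ℤ) (a : V → ℤ)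
    (ε : V → ℝ) (hε : Function.Injective ε) (hε_mem : ∀ x, ε x ∈ Set.Ico 0 1)
    (hadj : ∀ u v, u ≠ v → (G.Adj u v ↔ n ≤ a u + a v)) : IsIntervalGraph G := by
  set ℓ : V → ℝ := fun x => n - a x - ε x with hℓ
  have ℓ_le_iff : ∀ u v, ℓ u ≤ a v ↔ n ≤ a u + a v := fun u v => by
    rw [← sub_nonpos (a := n), ← intCast_le_iff_nonpos_of_mem_Ico (hε_mem u)]
    push_cast
    constructor <;> intro h <;> linarith
  have ℓ_injective : Function.Injective ℓ := fun u v h => by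
    have hsum : (a u : ℝ) + ε u = a v + ε v := by simp only [hℓ] at h; linarith
    have ha : a u = a v := by
      have := congrArg Int.floor hsum
      rwa [Int.floor_intCast_add, Int.floor_intCast_add, Int.floor_eq_zero_iff.mpr (hε_mem u),
        Int.floor_eq_zero_iff.mpr (hε_mem v), add_zero, add_zero] at this
    exact hε (by rw [ha] at hsum; linarith)
  refine ⟨fun x _ => (ℓ x, max (a x) (ℓ x)), fun x _ => le_max_right _ _, fun u v huv => ?_⟩
  rw [Fin.forall_fin_one, hadj u v huv, max_le_min_iff_of_le (le_max_right _ _) (le_max_right _ _),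
    le_max_iff, le_max_iff, ℓ_le_iff, ℓ_le_iff, add_comm (a v)]
  constructor
  · intro h
    exact ⟨Or.inl h, Or.inl h⟩
  · rintro ⟨h | h, h' | h'⟩
    any_goals assumption
    exact absurd (le_antisymm h h') (ℓ_injective.ne huv)

theorem boxicity_eq_one {V : Type*} {G : SimpleGraph V} (h : IsIntervalGraph G) :
    boxicity G = 1 := by
  have h1 : 1 ∈ {ℓ : ℕ | 0 < ℓ ∧ BoxRep G ℓ} := ⟨one_pos, h⟩
  exact le_antisymm (Nat.sInf_le h1) (Nat.sInf_mem ⟨1, h1⟩).1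

lemma zeroDivisorGraph_adj {R : Type*} [CommRing R] {u v} :
    (zeroDivisorGraph R).Adj u v ↔ u ≠ v ∧ (u : R) * v = 0 := by
  simp only [zeroDivisorGraph, fromRel_adj, mul_comm (v : R), or_self]

lemma ZMod.mul_eq_zero_iff_le_factorization_add {p n : ℕ} (hp : p.Prime) {x y : ZMod (p ^ n)}
    (hx : x ≠ 0) (hy : y ≠ 0) :
    x * y = 0 ↔ n ≤ x.val.factorization p + y.val.factorization p := by
  have hx' := (ZMod.val_ne_zero x).mpr hx
  have hy' := (ZMod.val_ne_zero y).mpr hy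
  rw [← ZMod.val_eq_zero, ZMod.val_mul, ← Nat.dvd_iff_mod_eq_zero,
    hp.pow_dvd_iff_le_factorization (mul_ne_zero hx' hy'), Nat.factorization_mul hx' hy',
    Finsupp.add_apply]

lemma ZMod.val_div_mem_Ico {N : ℕ} [NeZero N] (x : ZMod N) : (x.val / N : ℝ) ∈ Set.Ico 0 1 := by
  have hN : (0 : ℝ) < N := by exact_mod_cast NeZero.pos N
  refine ⟨by positivity, (div_lt_one hN).mpr (by exact_mod_cast ZMod.val_lt x)⟩

lemma ZMod.val_div_injective (N : ℕ) [NeZero N] :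
    Function.Injective fun x : ZMod N => (x.val / N : ℝ) := fun x y h => by
  have hN : (N : ℝ) ≠ 0 := by exact_mod_cast NeZero.ne N
  exact ZMod.val_injective N (by exact_mod_cast (div_left_inj' hN).mp h)

theorem zeroDivisorGraph_prime_pow_interval_general (p n : ℕ) (hp : p.Prime) :
    IsIntervalGraph (zeroDivisorGraph (ZMod (p ^ n))) ∧
    boxicity (zeroDivisorGraph (ZMod (p ^ n))) = 1 := by
  have : NeZero (p ^ n) := ⟨pow_ne_zero n hp.ne_zero⟩
  have hint : IsIntervalGraph (zeroDivisorGraph (ZMod (p ^ n))) := by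
    refine isIntervalGraph_of_adj_iff_le_add _ n (fun x => (x.1.val.factorization p : ℤ))
      (fun x => (x.1.val / (p ^ n : ℕ) : ℝ)) ((ZMod.val_div_injective _).comp Subtype.val_injective)
      (fun x => ZMod.val_div_mem_Ico x.1) fun u v huv => ?_
    rw [zeroDivisorGraph_adj, and_iff_right huv,
      ZMod.mul_eq_zero_iff_le_factorization_add hp u.2.1 v.2.1]
    norm_cast
  exact ⟨hint, boxicity_eq_one hint⟩

/-- For every prime `p` and `n ≥ 2`, `Γ(ℤ_{pⁿ})` is an interval graph, i.e. its
boxicity is 1. -/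
theorem zeroDivisorGraph_prime_pow_interval (p n : ℕ) (hp : p.Prime) (hn : 2 ≤ n) :
    IsIntervalGraph (zeroDivisorGraph (ZMod (p ^ n))) ∧
    boxicity (zeroDivisorGraph (ZMod (p ^ n))) = 1 :=
  zeroDivisorGraph_prime_pow_interval_general p n hp
end
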